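/- arXiv:1610.00771 — 5 statements merged into one kernel-verified Lean document; each statement's English description precedes it below -/
import Mathlib

section
/- There exists a universal constant c such that: for every finite-dimensional complex Hilbert space H, every δ ≥ 0, and every unit vector φ ∈ ℂ² ⊗ ℂ² ⊗ H satisfying ‖(σx ⊗ σx ⊗ I)φ − φ‖ ≤ δ and ‖(σz ⊗ σz ⊗ I)φ − φ‖ ≤ δ, there is a unit vector φ' ∈ H with ‖φ − |EPR⟩ ⊗ φ'‖ ≤ c·δ. -/
open scoped Matrix Kronecker ComplexConjugate

noncomputable section

abbrev Reg (n : ℕ) := (Fin n × Fin 2) → Fin 2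

def cnorm {ι : Type*} [Fintype ι] (v : ι → ℂ) : ℝ :=
  Real.sqrt (∑ i, ‖v i‖ ^ 2)

def cinner {ι : Type*} [Fintype ι] (v w : ι → ℂ) : ℂ :=
  ∑ i, (starRingEnd ℂ) (v i) * w i

def IsReflection {ι : Type*} [Fintype ι] [DecidableEq ι] (M : Matrix ι ι ℂ) : Prop :=
  M.IsHermitian ∧ M * M = 1

def sx : Matrix (Fin 2) (Fin 2) ℂ := !![0, 1; 1, 0]
def sy : Matrix (Fin 2) (Fin 2) ℂ := !![0, -Complex.I; Complex.I, 0]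
def sz : Matrix (Fin 2) (Fin 2) ℂ := !![1, 0; 0, -1]

def onQubit {K : Type*} [Fintype K] [DecidableEq K] (k : K) (M : Matrix (Fin 2) (Fin 2) ℂ) :
    Matrix (K → Fin 2) (K → Fin 2) ℂ :=
  fun f g => if ∀ k', k' ≠ k → f k' = g k' then M (f k) (g k) else 0

def eprAmp : Fin 2 → Fin 2 → ℂ := fun a b => if a = b then ((Real.sqrt 2 : ℝ) : ℂ)⁻¹ else 0

def eprLocal (n : ℕ) : Reg n → ℂ := fun f => ∏ j : Fin n, eprAmp (f (j, 0)) (f (j, 1))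

def psiExt {dA dB : ℕ} (n : ℕ) (ψ : Fin dA × Fin dB → ℂ) :
    (Fin dA × Reg n) × (Fin dB × Reg n) → ℂ :=
  fun p => ψ (p.1.1, p.2.1) * eprLocal n p.1.2 * eprLocal n p.2.2

def NQubitHyp (n : ℕ) (ε : ℝ) {dA dB : ℕ}
    (XA ZA : Fin n → Matrix (Fin dA) (Fin dA) ℂ)
    (XB ZB : Fin n → Matrix (Fin dB) (Fin dB) ℂ)
    (ψ : Fin dA × Fin dB → ℂ) : Prop :=
  cnorm ψ = 1 ∧
  (∀ j, IsReflection (XA j) ∧ IsReflection (ZA j) ∧ IsReflection (XB j) ∧ IsReflection (ZB j)) ∧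
  (∀ j, XA j * ZA j + ZA j * XA j = 0) ∧
  (∀ j, XB j * ZB j + ZB j * XB j = 0) ∧
  (∀ P Q : Fin n → Matrix (Fin dA) (Fin dA) ℂ, (P = XA ∨ P = ZA) → (Q = XA ∨ Q = ZA) →
    ∀ i j : Fin n, i ≠ j →
    cnorm (((P i * Q j - Q j * P i) ⊗ₖ (1 : Matrix (Fin dB) (Fin dB) ℂ)).mulVec ψ) ≤ ε) ∧
  (∀ P Q : Fin n → Matrix (Fin dB) (Fin dB) ℂ, (P = XB ∨ P = ZB) → (Q = XB ∨ Q = ZB) →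
    ∀ i j : Fin n, i ≠ j →
    cnorm (((1 : Matrix (Fin dA) (Fin dA) ℂ) ⊗ₖ (P i * Q j - Q j * P i)).mulVec ψ) ≤ ε) ∧
  (∀ (P : Fin n → Matrix (Fin dA) (Fin dA) ℂ) (P' : Fin n → Matrix (Fin dB) (Fin dB) ℂ),
    ((P = XA ∧ P' = XB) ∨ (P = ZA ∧ P' = ZB)) →
    ∀ j, cnorm ((P j ⊗ₖ P' j).mulVec ψ - ψ) ≤ ε)
/-!
The operators `X = σx ⊗ σx` and `Z = σz ⊗ σz` have `EPR ⊗ H` as their joint `+1` eigenspace.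
Split `φ = EPR ⊗ v + R` with `v = (⟨EPR| ⊗ 1) φ`; coordinatewise, `‖R‖² ≤ (‖Xφ - φ‖² + ‖Zφ - φ‖²) / 4`,
so `‖R‖ ≤ δ`. Normalizing `v` moves `EPR ⊗ v` by `|‖v‖ - 1| = |‖EPR ⊗ v‖ - ‖φ‖| ≤ ‖R‖`, so `c = 2` works.
-/

theorem norm_sub_inv_norm_smul_self {𝕜 F : Type*} [RCLike 𝕜] [NormedAddCommGroup F]
    [NormedSpace 𝕜 F] {y : F} (hy : y ≠ 0) :
    ‖y - (‖y‖ : 𝕜)⁻¹ • y‖ = |‖y‖ - 1| := by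
  have hy' : ‖y‖ ≠ 0 := norm_ne_zero_iff.mpr hy
  have h : y - (‖y‖ : 𝕜)⁻¹ • y = ((1 - ‖y‖⁻¹ : ℝ) : 𝕜) • y := by
    rw [RCLike.ofReal_sub, RCLike.ofReal_one, RCLike.ofReal_inv, sub_smul, one_smul]
  rw [h, norm_smul, RCLike.norm_ofReal, ← abs_norm y, ← abs_mul, sub_mul, one_mul,
    abs_norm, inv_mul_cancel₀ hy']

theorem LinearIsometry.exists_norm_eq_one_norm_sub_le {𝕜 E F : Type*} [RCLike 𝕜]
    [SeminormedAddCommGroup E] [NormedSpace 𝕜 E] [NormedAddCommGroup F] [NormedSpace 𝕜 F]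
    [Nontrivial F] (L : F →ₗᵢ[𝕜] E) {x : E} (hx : ‖x‖ = 1) (y : F) :
    ∃ u : F, ‖u‖ = 1 ∧ ‖x - L u‖ ≤ 2 * ‖x - L y‖ := by
  by_cases hy : y = 0
  · obtain ⟨z, hz⟩ := exists_ne (0 : F)
    refine ⟨(‖z‖ : 𝕜)⁻¹ • z, norm_smul_inv_norm hz, ?_⟩
    calc ‖x - L _‖ ≤ ‖x‖ + ‖L ((‖z‖ : 𝕜)⁻¹ • z)‖ := norm_sub_le _ _
      _ = 2 * ‖x - L y‖ := by
        rw [L.norm_map, norm_smul_inv_norm hz, hy, map_zero, sub_zero, hx, two_mul]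
  · refine ⟨(‖y‖ : 𝕜)⁻¹ • y, norm_smul_inv_norm hy, ?_⟩
    calc ‖x - L _‖ ≤ ‖x - L y‖ + ‖L y - L ((‖y‖ : 𝕜)⁻¹ • y)‖ :=
          norm_sub_le_norm_sub_add_norm_sub _ _ _
      _ = ‖x - L y‖ + |‖L y‖ - ‖x‖| := by
        rw [← map_sub, L.norm_map, L.norm_map, hx, norm_sub_inv_norm_smul_self hy]
      _ ≤ 2 * ‖x - L y‖ := by
        rw [two_mul, norm_sub_rev x]
        gcongr
        exact abs_norm_sub_norm_le _ _

theorem cnorm_nonneg {ι : Type*} [Fintype ι] (v : ι → ℂ) : 0 ≤ cnorm v := Real.sqrt_nonneg _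

theorem cnorm_sq {ι : Type*} [Fintype ι] (v : ι → ℂ) : cnorm v ^ 2 = ∑ i, ‖v i‖ ^ 2 :=
  Real.sq_sqrt (Finset.sum_nonneg fun _ _ => sq_nonneg _)

theorem cnorm_eq_norm_toLp {ι : Type*} [Fintype ι] (v : ι → ℂ) :
    cnorm v = ‖WithLp.toLp 2 v‖ := (EuclideanSpace.norm_eq _).symm

theorem norm_toLp_kron {κ ι : Type*} [Fintype κ] [Fintype ι] (ψ : EuclideanSpace ℂ κ)
    (v : EuclideanSpace ℂ ι) :
    ‖(WithLp.toLp 2 fun p : κ × ι => ψ p.1 * v p.2 : EuclideanSpace ℂ (κ × ι))‖ = ‖ψ‖ * ‖v‖ := by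
  simp only [EuclideanSpace.norm_eq, norm_mul, mul_pow, Fintype.sum_prod_type,
    ← Finset.sum_mul_sum, ← Real.sqrt_mul (Finset.sum_nonneg fun _ _ => sq_nonneg _)]

def kronIsometry {κ ι : Type*} [Fintype κ] [Fintype ι] (ψ : EuclideanSpace ℂ κ) (hψ : ‖ψ‖ = 1) :
    EuclideanSpace ℂ ι →ₗᵢ[ℂ] EuclideanSpace ℂ (κ × ι) where
  toFun v := WithLp.toLp 2 fun p => ψ p.1 * v p.2
  map_add' v w := by ext p; exact mul_add _ _ _
  map_smul' c v := by ext p; exact mul_left_comm _ _ _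
  norm_map' v := by
    change ‖(WithLp.toLp 2 fun p => ψ p.1 * v p.2 : EuclideanSpace ℂ (κ × ι))‖ = ‖v‖
    rw [norm_toLp_kron, hψ, one_mul]

def eprVec : EuclideanSpace ℂ (Fin 2 × Fin 2) := WithLp.toLp 2 fun q => eprAmp q.1 q.2

theorem norm_eprVec : ‖eprVec‖ = 1 := by
  rw [eprVec, ← cnorm_eq_norm_toLp, cnorm, Real.sqrt_eq_one]
  norm_num [Fintype.sum_prod_type, Fin.sum_univ_two, eprAmp]

theorem kroneckerMap_one_mulVec_apply {κ ι : Type*} [Fintype κ] [Fintype ι] [DecidableEq ι]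
    (A : Matrix κ κ ℂ) (φ : κ × ι → ℂ) (q : κ) (k : ι) :
    (A ⊗ₖ (1 : Matrix ι ι ℂ)).mulVec φ (q, k) = ∑ r, A q r * φ (r, k) := by
  simp [Matrix.mulVec, dotProduct, Fintype.sum_prod_type, Matrix.kroneckerMap_apply,
    Matrix.one_apply, mul_ite, ite_mul]

/-- `(⟨EPR| ⊗ 1) φ`, so that `EPR ⊗ eprCoeff φ` is the orthogonal projection of `φ` onto
`EPR ⊗ ℂ^ι`. -/
def eprCoeff {ι : Type*} (φ : (Fin 2 × Fin 2) × ι → ℂ) : ι → ℂ :=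
  fun k => (φ ((0, 0), k) + φ ((1, 1), k)) / ((Real.sqrt 2 : ℝ) : ℂ)

-- `(a, b, c, d) = φ(·, k)` on `00, 01, 10, 11`: the two sides collect the entries of the residual
-- and those of `Xφ - φ`, `Zφ - φ` at a fixed `k`.
theorem norm_sq_epr_residual_le (a b c d : ℂ) :
    ‖a - (a + d) / 2‖ ^ 2 + ‖b‖ ^ 2 + ‖c‖ ^ 2 + ‖d - (a + d) / 2‖ ^ 2 ≤
      (‖d - a‖ ^ 2 + ‖c - b‖ ^ 2 + ‖b - c‖ ^ 2 + ‖a - d‖ ^ 2) / 4 +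
      (‖-b - b‖ ^ 2 + ‖-c - c‖ ^ 2) / 4 := by
  have h1 : a - (a + d) / 2 = (a - d) / 2 := by ring
  have h2 : d - (a + d) / 2 = -((a - d) / 2) := by ring
  have h3 : -b - b = -2 * b := by ring
  have h4 : -c - c = -2 * c := by ring
  simp only [h1, h2, h3, h4, norm_neg, norm_sub_rev d a, norm_sub_rev c b, norm_div, norm_mul,
    RCLike.norm_two]
  nlinarith [sq_nonneg ‖b - c‖]

theorem cnorm_sub_epr_kron_sq_le {ι : Type*} [Fintype ι] [DecidableEq ι]
    (φ : (Fin 2 × Fin 2) × ι → ℂ) :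
    cnorm (fun p => φ p - eprAmp p.1.1 p.1.2 * eprCoeff φ p.2) ^ 2 ≤
      (cnorm (((sx ⊗ₖ sx) ⊗ₖ (1 : Matrix ι ι ℂ)).mulVec φ - φ) ^ 2 +
        cnorm (((sz ⊗ₖ sz) ⊗ₖ (1 : Matrix ι ι ℂ)).mulVec φ - φ) ^ 2) / 4 := by
  simp only [cnorm_sq, Fintype.sum_prod_type_right (α₁ := Fin 2 × Fin 2),
    ← Finset.sum_add_distrib, Finset.sum_div]
  refine Finset.sum_le_sum fun k _ => ?_
  have hs : ((Real.sqrt 2 : ℝ) : ℂ)⁻¹ * eprCoeff φ k = (φ ((0, 0), k) + φ ((1, 1), k)) / 2 := by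
    have h2 : ((Real.sqrt 2 : ℝ) : ℂ) * (Real.sqrt 2 : ℝ) = 2 := by
      rw [← Complex.ofReal_mul, Real.mul_self_sqrt zero_le_two, Complex.ofReal_ofNat]
    rw [eprCoeff, ← h2]
    field_simp
  simp only [Fintype.sum_prod_type, Fin.sum_univ_two, kroneckerMap_one_mulVec_apply,
    Matrix.kroneckerMap_apply, sx, sz, eprAmp, Pi.sub_apply]
  simp only [↓reduceIte, hs, zero_ne_one, one_ne_zero, Matrix.of_apply, Matrix.cons_val_zero,
    Matrix.cons_val_one, zero_mul, one_mul, neg_mul, add_zero, zero_add, sub_zero, sub_self,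
    norm_zero, neg_zero, neg_neg]
  linarith [norm_sq_epr_residual_le (φ ((0, 0), k)) (φ ((0, 1), k)) (φ ((1, 0), k)) (φ ((1, 1), k))]

/-- Claim (a state nearly stabilized by σx⊗σx and σz⊗σz is close to EPR ⊗ junk). -/
theorem stmt_2 :
    ∃ c : ℝ, 0 < c ∧
    ∀ (m : ℕ) (δ : ℝ), 0 ≤ δ →
    ∀ φ : (Fin 2 × Fin 2) × Fin m → ℂ,
      cnorm φ = 1 →
      cnorm (((sx ⊗ₖ sx) ⊗ₖ (1 : Matrix (Fin m) (Fin m) ℂ)).mulVec φ - φ) ≤ δ →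
      cnorm (((sz ⊗ₖ sz) ⊗ₖ (1 : Matrix (Fin m) (Fin m) ℂ)).mulVec φ - φ) ≤ δ →
      ∃ φ' : Fin m → ℂ, cnorm φ' = 1 ∧
        cnorm (fun p => φ p - eprAmp p.1.1 p.1.2 * φ' p.2) ≤ c * δ := by
  refine ⟨2, two_pos, fun m δ hδ φ hφ hX hZ => ?_⟩
  have : Nonempty (Fin m) := by
    by_contra h
    simp [cnorm, not_nonempty_iff.mp h] at hφ
  have hres : cnorm (fun p => φ p - eprAmp p.1.1 p.1.2 * eprCoeff φ p.2) ≤ δ := by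
    rw [← pow_le_pow_iff_left₀ (cnorm_nonneg _) hδ two_ne_zero]
    calc _ ≤ _ := cnorm_sub_epr_kron_sq_le φ
      _ ≤ (δ ^ 2 + δ ^ 2) / 4 := by gcongr <;> exact cnorm_nonneg _
      _ ≤ δ ^ 2 := by nlinarith
  obtain ⟨u, hu, hdist⟩ := (kronIsometry eprVec norm_eprVec).exists_norm_eq_one_norm_sub_le
    (x := WithLp.toLp 2 φ) (by rwa [← cnorm_eq_norm_toLp]) (WithLp.toLp 2 (eprCoeff φ))
  refine ⟨u.ofLp, by rwa [cnorm_eq_norm_toLp], ?_⟩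
  rw [cnorm_eq_norm_toLp] at hres ⊢
  exact hdist.trans (mul_le_mul_of_nonneg_left hres zero_le_two)

end
end

section
/- Let n, d ≥ 1, δ ≥ 0, let H be a finite-dimensional complex Hilbert space, and let ψ be a unit vector in (ℂ^d)^{⊗n} ⊗ H. Suppose that for each j ∈ {1,…,n} there is a unit vector v_j ∈ (ℂ^d)^{⊗n} ⊗ H of the form v_j = |1⟩_j ⊗ φ_j — i.e., the j-th tensor factor of v_j is the fixed standard basis vector |1⟩ ∈ ℂ^d and φ_j is a unit vector in the tensor product of the remaining n−1 factors with H — such that ‖ψ − v_j‖ ≤ δ. Then there exists a unit vector φ ∈ H such that ‖ψ − |1⟩^{⊗n} ⊗ φ‖ ≤ √(2n)·δ. -/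
open scoped Matrix Kronecker ComplexConjugate

noncomputable section

lemma cnorm_sq_aux {ι : Type*} [Fintype ι] (v : ι → ℂ) :
    (cnorm v) ^ 2 = ∑ i, ‖v i‖ ^ 2 := by
  rw [cnorm, Real.sq_sqrt (Finset.sum_nonneg fun i _ => sq_nonneg _)]

lemma split_sum_aux {n d m : ℕ} (a0 : Fin n → Fin d)
    (F : (Fin n → Fin d) × Fin m → ℝ) :
    ∑ p, F p = (∑ b, F (a0, b)) + ∑ p : (Fin n → Fin d) × Fin m,
      (if p.1 = a0 then 0 else F p) := by
  classical
  have : ∀ p : (Fin n → Fin d) × Fin m,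
      F p = (if p.1 = a0 then F p else 0) + (if p.1 = a0 then 0 else F p) := by
    intro p; by_cases h : p.1 = a0 <;> simp [h]
  rw [Finset.sum_congr rfl fun p _ => this p, Finset.sum_add_distrib]
  congr 1
  rw [Fintype.sum_prod_type, Finset.sum_comm]
  simp


/-- Claim (closeness to a basis vector on each factor implies closeness on all). -/
theorem stmt_3 (n d m : ℕ) (hn : 1 ≤ n) (hd : 1 ≤ d) (δ : ℝ) (hδ : 0 ≤ δ)
    (e : Fin d)
    (ψ : (Fin n → Fin d) × Fin m → ℂ) (hψ : cnorm ψ = 1)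
    (hclose : ∀ j : Fin n, ∃ φj : ({i : Fin n // i ≠ j} → Fin d) × Fin m → ℂ,
      cnorm φj = 1 ∧
      cnorm (fun p => ψ p -
        if p.1 j = e then φj (fun i => p.1 i.1, p.2) else 0) ≤ δ) :
    ∃ φ : Fin m → ℂ, cnorm φ = 1 ∧
      cnorm (fun p => ψ p - if p.1 = (fun _ => e) then φ p.2 else 0)
        ≤ Real.sqrt (2 * n) * δ := by
  classical
  set a0 : Fin n → Fin d := fun _ => e with ha0
  set φ0 : Fin m → ℂ := fun b => ψ (a0, b) with hφ0
  set c2 : ℝ := ∑ b, ‖φ0 b‖ ^ 2 with hc2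
  set S : ℝ := ∑ p : (Fin n → Fin d) × Fin m, (if p.1 = a0 then 0 else ‖ψ p‖ ^ 2) with hS
  have hsum1 : ∑ p, ‖ψ p‖ ^ 2 = 1 := by
    have := cnorm_sq_aux ψ; rw [hψ] at this; simpa using this.symm
  have hsplit : c2 + S = 1 := by
    rw [← hsum1, split_sum_aux a0 (fun p => ‖ψ p‖ ^ 2)]
  -- each factor bound
  have hj : ∀ j : Fin n, (∑ p : (Fin n → Fin d) × Fin m,
      (if p.1 j = e then 0 else ‖ψ p‖ ^ 2)) ≤ δ ^ 2 := by
    intro j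
    obtain ⟨φj, -, hφj2⟩ := hclose j
    set D : (Fin n → Fin d) × Fin m → ℂ := fun p => ψ p -
      if p.1 j = e then φj (fun i => p.1 i.1, p.2) else 0 with hD
    have h1 : ∀ p : (Fin n → Fin d) × Fin m,
        (if p.1 j = e then 0 else ‖ψ p‖ ^ 2) ≤ ‖D p‖ ^ 2 := by
      intro p
      by_cases h : p.1 j = e
      · simp [h]
      · simp [hD, h]
    calc (∑ p : (Fin n → Fin d) × Fin m, (if p.1 j = e then 0 else ‖ψ p‖ ^ 2))
        ≤ ∑ p, ‖D p‖ ^ 2 := Finset.sum_le_sum fun p _ => h1 p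
      _ = (cnorm D) ^ 2 := (cnorm_sq_aux D).symm
      _ ≤ δ ^ 2 := by
          have h0 : (0:ℝ) ≤ cnorm D := Real.sqrt_nonneg _
          nlinarith
  have hSn : S ≤ n * δ ^ 2 := by
    have key : S ≤ ∑ j : Fin n, ∑ p : (Fin n → Fin d) × Fin m,
        (if p.1 j = e then 0 else ‖ψ p‖ ^ 2) := by
      rw [hS, Finset.sum_comm]
      refine Finset.sum_le_sum fun p _ => ?_
      by_cases h : p.1 = a0
      · simp only [h, if_pos rfl]
        exact Finset.sum_nonneg fun j _ => by positivity
      · have : ∃ j : Fin n, p.1 j ≠ e := by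
          by_contra hc
          push_neg at hc
          exact h (funext fun j => hc j)
        obtain ⟨j, hje⟩ := this
        rw [if_neg h]
        calc ‖ψ p‖ ^ 2 = (if p.1 j = e then 0 else ‖ψ p‖ ^ 2) := by rw [if_neg hje]
          _ ≤ _ := Finset.single_le_sum (f := fun j => if p.1 j = e then 0 else ‖ψ p‖ ^ 2)
              (fun j _ => by positivity) (Finset.mem_univ j)
    calc S ≤ _ := key
      _ ≤ ∑ _j : Fin n, δ ^ 2 := Finset.sum_le_sum fun j _ => hj j
      _ = n * δ ^ 2 := by simp [Finset.sum_const, mul_comm]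
  have hc2nn : 0 ≤ c2 := Finset.sum_nonneg fun b _ => sq_nonneg _
  have hSnn : 0 ≤ S := Finset.sum_nonneg fun p _ => by positivity
  -- choose φ
  set c : ℝ := Real.sqrt c2 with hc
  have hcsq : c ^ 2 = c2 := Real.sq_sqrt hc2nn
  have hcnn : 0 ≤ c := Real.sqrt_nonneg _
  have hcle1 : c ≤ 1 := by nlinarith
  have hm : 0 < m := by
    rcases Nat.eq_zero_or_pos m with hm0 | hm0
    · exfalso; subst hm0; simp at hsum1
    · exact hm0
  obtain ⟨φ, hφnorm, hφdiff⟩ :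
      ∃ φ : Fin m → ℂ, cnorm φ = 1 ∧ ∑ b, ‖φ0 b - φ b‖ ^ 2 = (1 - c) ^ 2 := by
    rcases eq_or_lt_of_le hc2nn with hc20 | hc20
    · -- c2 = 0, all φ0 b = 0
      have hc0 : c = 0 := by rw [hc, ← hc20, Real.sqrt_zero]
      have hall : ∀ b, φ0 b = 0 := by
        intro b
        have := (Finset.sum_eq_zero_iff_of_nonneg
          (fun b _ => sq_nonneg ‖φ0 b‖)).mp hc20.symm b (Finset.mem_univ b)
        simpa using this
      refine ⟨fun b => if b = ⟨0, hm⟩ then 1 else 0, ?_, ?_⟩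
      · rw [cnorm]
        have : ∑ b : Fin m, ‖(if b = ⟨0, hm⟩ then (1:ℂ) else 0)‖ ^ 2 = 1 := by
          simp [apply_ite (‖·‖), Finset.sum_ite_eq']
        rw [this, Real.sqrt_one]
      · rw [hc0]
        simp only [hall, zero_sub, norm_neg]
        simp [apply_ite (‖·‖), Finset.sum_ite_eq']
    · -- c2 > 0
      have hcpos : 0 < c := Real.sqrt_pos.mpr hc20
      refine ⟨fun b => φ0 b / (c : ℂ), ?_, ?_⟩
      · rw [cnorm]
        have : ∑ b, ‖φ0 b / (c:ℂ)‖ ^ 2 = c2 / c ^ 2 := by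
          rw [Finset.sum_div]
          refine Finset.sum_congr rfl fun b _ => ?_
          rw [norm_div, div_pow, Complex.norm_real, Real.norm_eq_abs, abs_of_nonneg hcnn]
        rw [this, hcsq, div_self (ne_of_gt hc20), Real.sqrt_one]
      · have : ∀ b, ‖φ0 b - φ0 b / (c:ℂ)‖ ^ 2 = ‖φ0 b‖ ^ 2 * ((1 - 1/c) ^ 2) := by
          intro b
          have : φ0 b - φ0 b / (c:ℂ) = φ0 b * ((1:ℂ) - 1/(c:ℂ)) := by ring
          rw [this, norm_mul, mul_pow]
          congr 1
          have : ((1:ℂ) - 1/(c:ℂ)) = ((1 - 1/c : ℝ) : ℂ) := by push_cast; ring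
          rw [this, Complex.norm_real, Real.norm_eq_abs, sq_abs]
        simp only [this, ← Finset.sum_mul, ← hc2]
        rw [← hcsq]
        have hcne : c ≠ 0 := ne_of_gt hcpos
        field_simp
        ring
  refine ⟨φ, hφnorm, ?_⟩
  -- final bound
  have hDsum : ∑ p : (Fin n → Fin d) × Fin m,
      ‖ψ p - (if p.1 = a0 then φ p.2 else 0)‖ ^ 2 = (1 - c) ^ 2 + S := by
    rw [split_sum_aux a0 (fun p => ‖ψ p - (if p.1 = a0 then φ p.2 else 0)‖ ^ 2)]
    congr 1
    · rw [← hφdiff]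
      refine Finset.sum_congr rfl fun b _ => ?_
      simp [hφ0]
    · refine Finset.sum_congr rfl fun p _ => ?_
      by_cases h : p.1 = a0 <;> simp [h]
  have hbound : (1 - c) ^ 2 + S ≤ 2 * n * δ ^ 2 := by nlinarith
  rw [cnorm]
  have : ∑ p : (Fin n → Fin d) × Fin m,
      ‖ψ p - (if p.1 = (fun _ => e) then φ p.2 else 0)‖ ^ 2 ≤ 2 * n * δ ^ 2 := by
    rw [show (fun _ : Fin n => e) = a0 from rfl, hDsum]; exact hbound
  calc Real.sqrt (∑ p : (Fin n → Fin d) × Fin m,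
        ‖ψ p - (if p.1 = (fun _ => e) then φ p.2 else 0)‖ ^ 2)
      ≤ Real.sqrt (2 * n * δ ^ 2) := Real.sqrt_le_sqrt this
    _ = Real.sqrt (2 * n) * δ := by
        rw [Real.sqrt_mul (by positivity), Real.sqrt_sq hδ]


end
end

section
/- Let X and Z be reflections on a finite-dimensional complex Hilbert space H with XZ + ZX = 0, and define S = ½(I ⊗ I + X ⊗ σx + Z ⊗ σz + iXZ ⊗ σy) on H ⊗ ℂ². Then S is a reflection (S = S†, S² = I), and S(X ⊗ I)S = I ⊗ σx, S(Z ⊗ I)S = I ⊗ σz, and S(iXZ ⊗ I)S = I ⊗ σy. -/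
open scoped Matrix Kronecker ComplexConjugate

noncomputable section

section Aux

lemma sxsx : sx * sx = 1 := by
  ext i j; fin_cases i <;> fin_cases j <;>
    simp [sx, Matrix.mul_apply, Fin.sum_univ_two, Matrix.one_apply]
lemma sysy : sy * sy = 1 := by
  ext i j; fin_cases i <;> fin_cases j <;>
    simp [sy, Matrix.mul_apply, Fin.sum_univ_two, Matrix.one_apply]
lemma szsz : sz * sz = 1 := by
  ext i j; fin_cases i <;> fin_cases j <;>
    simp [sz, Matrix.mul_apply, Fin.sum_univ_two, Matrix.one_apply]
lemma sxsz : sx * sz = -Complex.I • sy := by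
  ext i j; fin_cases i <;> fin_cases j <;>
    simp [sx, sy, sz, Matrix.mul_apply, Fin.sum_univ_two]
lemma szsx : sz * sx = Complex.I • sy := by
  ext i j; fin_cases i <;> fin_cases j <;>
    simp [sx, sy, sz, Matrix.mul_apply, Fin.sum_univ_two]
lemma sxsy : sx * sy = Complex.I • sz := by
  ext i j; fin_cases i <;> fin_cases j <;>
    simp [sx, sy, sz, Matrix.mul_apply, Fin.sum_univ_two]
lemma sysx : sy * sx = -Complex.I • sz := by
  ext i j; fin_cases i <;> fin_cases j <;>
    simp [sx, sy, sz, Matrix.mul_apply, Fin.sum_univ_two]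
lemma sysz : sy * sz = Complex.I • sx := by
  ext i j; fin_cases i <;> fin_cases j <;>
    simp [sx, sy, sz, Matrix.mul_apply, Fin.sum_univ_two]
lemma szsy : sz * sy = -Complex.I • sx := by
  ext i j; fin_cases i <;> fin_cases j <;>
    simp [sx, sy, sz, Matrix.mul_apply, Fin.sum_univ_two]
lemma sxH : sx.conjTranspose = sx := by
  ext i j; fin_cases i <;> fin_cases j <;> simp [sx, Matrix.conjTranspose_apply]
lemma syH : sy.conjTranspose = sy := by
  ext i j; fin_cases i <;> fin_cases j <;> simp [sy, Matrix.conjTranspose_apply]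
lemma szH : sz.conjTranspose = sz := by
  ext i j; fin_cases i <;> fin_cases j <;> simp [sz, Matrix.conjTranspose_apply]

lemma kronH {m n : Type*} [Fintype m] [Fintype n] (A : Matrix m m ℂ) (B : Matrix n n ℂ) :
    (A ⊗ₖ B).conjTranspose = A.conjTranspose ⊗ₖ B.conjTranspose := by
  ext i j
  simp [Matrix.conjTranspose_apply, Matrix.kroneckerMap_apply, mul_comm]

lemma neg_kron {m n : Type*} [Fintype m] [Fintype n] (A : Matrix m m ℂ) (B : Matrix n n ℂ) :
    (-A) ⊗ₖ B = -(A ⊗ₖ B) := by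
  ext i j; simp [Matrix.kroneckerMap_apply]

lemma kron_neg {m n : Type*} [Fintype m] [Fintype n] (A : Matrix m m ℂ) (B : Matrix n n ℂ) :
    A ⊗ₖ (-B) = -(A ⊗ₖ B) := by
  ext i j; simp [Matrix.kroneckerMap_apply]

end Aux

/-- The swap operator built from anti-commuting reflections is a reflection
conjugating X⊗I, Z⊗I, iXZ⊗I to I⊗σx, I⊗σz, I⊗σy. -/
theorem stmt_6 (d : ℕ) (X Z : Matrix (Fin d) (Fin d) ℂ)
    (hX : IsReflection X) (hZ : IsReflection Z)
    (hanti : X * Z + Z * X = 0) :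
    let S : Matrix (Fin d × Fin 2) (Fin d × Fin 2) ℂ :=
      (1 / 2 : ℂ) • ((1 : Matrix (Fin d × Fin 2) (Fin d × Fin 2) ℂ)
        + X ⊗ₖ sx + Z ⊗ₖ sz + Complex.I • ((X * Z) ⊗ₖ sy))
    IsReflection S ∧
    S * (X ⊗ₖ (1 : Matrix (Fin 2) (Fin 2) ℂ)) * S = (1 : Matrix (Fin d) (Fin d) ℂ) ⊗ₖ sx ∧
    S * (Z ⊗ₖ (1 : Matrix (Fin 2) (Fin 2) ℂ)) * S = (1 : Matrix (Fin d) (Fin d) ℂ) ⊗ₖ sz ∧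
    S * (Complex.I • ((X * Z) ⊗ₖ (1 : Matrix (Fin 2) (Fin 2) ℂ))) * S
      = (1 : Matrix (Fin d) (Fin d) ℂ) ⊗ₖ sy := by
  intro S
  obtain ⟨hXH, hX2⟩ := hX
  obtain ⟨hZH, hZ2⟩ := hZ
  have hZX : Z * X = -(X * Z) := by
    have := hanti
    linear_combination (norm := noncomm_ring) this
  have hXZX : X * Z * X = -Z := by
    rw [mul_assoc, hZX, mul_neg, ← mul_assoc, hX2, one_mul]
  have hXXZ : X * (X * Z) = Z := by rw [← mul_assoc, hX2, one_mul]
  have hZXZ : Z * (X * Z) = -X := by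
    rw [← mul_assoc, hZX, neg_mul, mul_assoc, hZ2, mul_one]
  have hXZZ : X * Z * Z = X := by rw [mul_assoc, hZ2, mul_one]
  have hXZXZ : (X * Z) * (X * Z) = -1 := by
    rw [← mul_assoc, hXZX, neg_mul, hZ2]
  have hS2 : S * S = 1 := by
    simp only [S, Matrix.smul_mul, Matrix.mul_smul, Matrix.add_mul, Matrix.mul_add,
      Matrix.one_mul, Matrix.mul_one, ← Matrix.mul_kronecker_mul,
      sxsx, sysy, szsz, sxsz, szsx, sxsy, sysx, sysz, szsy,
      hX2, hZ2, hXZX, hXXZ, hZXZ, hXZZ, hXZXZ, hZX, Complex.I_mul_I,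
      Matrix.one_kronecker_one, Matrix.kronecker_smul, Matrix.smul_kronecker,
      neg_kron, kron_neg, smul_smul, smul_neg, neg_smul, Matrix.mul_neg, Matrix.neg_mul]
    match_scalars
    all_goals try ring1
    all_goals (ring_nf; simp [Complex.I_sq]; try ring1)
  have hSx : S * (X ⊗ₖ (1 : Matrix (Fin 2) (Fin 2) ℂ))
      = ((1 : Matrix (Fin d) (Fin d) ℂ) ⊗ₖ sx) * S := by
    simp only [S, Matrix.smul_mul, Matrix.mul_smul, Matrix.add_mul, Matrix.mul_add,
      Matrix.one_mul, Matrix.mul_one, ← Matrix.mul_kronecker_mul,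
      sxsx, sysy, szsz, sxsz, szsx, sxsy, sysx, sysz, szsy,
      hX2, hZ2, hXZX, hXXZ, hZXZ, hXZZ, hXZXZ, hZX, Complex.I_mul_I,
      Matrix.one_kronecker_one, Matrix.kronecker_smul, Matrix.smul_kronecker,
      neg_kron, kron_neg, smul_smul, smul_neg, neg_smul, Matrix.mul_neg, Matrix.neg_mul]
    match_scalars
    all_goals try ring1
    all_goals (ring_nf; simp [Complex.I_sq]; try ring1)
  have hSz : S * (Z ⊗ₖ (1 : Matrix (Fin 2) (Fin 2) ℂ))
      = ((1 : Matrix (Fin d) (Fin d) ℂ) ⊗ₖ sz) * S := by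
    simp only [S, Matrix.smul_mul, Matrix.mul_smul, Matrix.add_mul, Matrix.mul_add,
      Matrix.one_mul, Matrix.mul_one, ← Matrix.mul_kronecker_mul,
      sxsx, sysy, szsz, sxsz, szsx, sxsy, sysx, sysz, szsy,
      hX2, hZ2, hXZX, hXXZ, hZXZ, hXZZ, hXZXZ, hZX, Complex.I_mul_I,
      Matrix.one_kronecker_one, Matrix.kronecker_smul, Matrix.smul_kronecker,
      neg_kron, kron_neg, smul_smul, smul_neg, neg_smul, Matrix.mul_neg, Matrix.neg_mul]
    match_scalars
    all_goals try ring1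
    all_goals (ring_nf; simp [Complex.I_sq]; try ring1)
  have hSy : S * (Complex.I • ((X * Z) ⊗ₖ (1 : Matrix (Fin 2) (Fin 2) ℂ)))
      = ((1 : Matrix (Fin d) (Fin d) ℂ) ⊗ₖ sy) * S := by
    simp only [S, Matrix.smul_mul, Matrix.mul_smul, Matrix.add_mul, Matrix.mul_add,
      Matrix.one_mul, Matrix.mul_one, ← Matrix.mul_kronecker_mul,
      sxsx, sysy, szsz, sxsz, szsx, sxsy, sysx, sysz, szsy,
      hX2, hZ2, hXZX, hXXZ, hZXZ, hXZZ, hXZXZ, hZX, Complex.I_mul_I,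
      Matrix.one_kronecker_one, Matrix.kronecker_smul, Matrix.smul_kronecker,
      neg_kron, kron_neg, smul_smul, smul_neg, neg_smul, Matrix.mul_neg, Matrix.neg_mul]
    match_scalars
    all_goals try ring1
    all_goals (ring_nf; simp [Complex.I_sq]; try ring1)
  have hXZH : (X * Z).conjTranspose = -(X * Z) := by
    rw [Matrix.conjTranspose_mul, hXH, hZH, hZX]
  have hSH : S.IsHermitian := by
    show S.conjTranspose = S
    simp only [S, Matrix.conjTranspose_smul, Matrix.conjTranspose_add,
      Matrix.conjTranspose_one, kronH, sxH, syH, szH, hXH.eq, hZH.eq, hXZH,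
      neg_kron, smul_neg, neg_smul, star_smul, Complex.star_def, Complex.conj_I,
      map_div₀, map_one, map_ofNat]
    match_scalars
    all_goals try ring1
    all_goals (ring_nf; simp [Complex.I_sq]; try ring1)
  refine ⟨⟨hSH, hS2⟩, ?_, ?_, ?_⟩
  · rw [hSx, mul_assoc, hS2, mul_one]
  · rw [hSz, mul_assoc, hS2, mul_one]
  · rw [hSy, mul_assoc, hS2, mul_one]

end
end

section
/- Let H_A and H_B be finite-dimensional complex Hilbert spaces, let R₀, R₁ be reflections on H_A, let S₀, S₁ be reflections on H_B, and let ψ ∈ H_A ⊗ H_B be a unit vector. Then Re⟨ψ, (R₀ ⊗ S₀ + R₀ ⊗ S₁ + R₁ ⊗ S₀ − R₁ ⊗ S₁)ψ⟩ ≤ 2√2; equivalently, the CHSH winning probability 1/2 + (1/8)·Re⟨ψ, (R₀ ⊗ S₀ + R₀ ⊗ S₁ + R₁ ⊗ S₀ − R₁ ⊗ S₁)ψ⟩ is at most cos²(π/8) = 1/2 + √2/4. -/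
open scoped Matrix Kronecker ComplexConjugate

noncomputable section

/-! For a unit vector ψ write aᵢ = (Rᵢ ⊗ 1)ψ and bⱼ = (1 ⊗ Sⱼ)ψ, all unit vectors.
Since Rᵢ is self-adjoint, ⟨ψ, (Rᵢ ⊗ Sⱼ)ψ⟩ = ⟨aᵢ, bⱼ⟩, so the CHSH value is
Re⟨a₀, b₀ + b₁⟩ + Re⟨a₁, b₀ - b₁⟩ ≤ ‖b₀ + b₁‖ + ‖b₀ - b₁‖ by Cauchy–Schwarz, and the parallelogram
law ‖b₀ + b₁‖² + ‖b₀ - b₁‖² = 4 bounds this sum by 2√2. -/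

open scoped InnerProductSpace

section InnerProductSpace

lemma norm_add_add_norm_sub_le_two_mul_sqrt_two (𝕜 : Type*) {E : Type*} [RCLike 𝕜]
    [NormedAddCommGroup E] [InnerProductSpace 𝕜 E] {x y : E} (hx : ‖x‖ ≤ 1) (hy : ‖y‖ ≤ 1) :
    ‖x + y‖ + ‖x - y‖ ≤ 2 * √2 := by
  have hpar := parallelogram_law_with_norm 𝕜 x y
  have hsum_sq : (‖x + y‖ + ‖x - y‖) ^ 2 ≤ 8 := by
    nlinarith [sq_nonneg (‖x + y‖ - ‖x - y‖), norm_nonneg x, norm_nonneg y]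
  calc ‖x + y‖ + ‖x - y‖ ≤ √8 := Real.le_sqrt_of_sq_le hsum_sq
    _ = 2 * √2 := by
      rw [show (8 : ℝ) = 2 ^ 2 * 2 by norm_num, Real.sqrt_mul (by norm_num),
        Real.sqrt_sq (by norm_num)]

variable {𝕜 E : Type*} [RCLike 𝕜] [NormedAddCommGroup E] [InnerProductSpace 𝕜 E]

open RCLike in
lemma re_inner_add_re_inner_sub_le_two_mul_sqrt_two {a₀ a₁ b₀ b₁ : E}
    (ha₀ : ‖a₀‖ ≤ 1) (ha₁ : ‖a₁‖ ≤ 1) (hb₀ : ‖b₀‖ ≤ 1) (hb₁ : ‖b₁‖ ≤ 1) :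
    re ⟪a₀, b₀ + b₁⟫_𝕜 + re ⟪a₁, b₀ - b₁⟫_𝕜 ≤ 2 * √2 := by
  have h₀ : re ⟪a₀, b₀ + b₁⟫_𝕜 ≤ ‖b₀ + b₁‖ :=
    (re_inner_le_norm _ _).trans (mul_le_of_le_one_left (norm_nonneg _) ha₀)
  have h₁ : re ⟪a₁, b₀ - b₁⟫_𝕜 ≤ ‖b₀ - b₁‖ :=
    (re_inner_le_norm _ _).trans (mul_le_of_le_one_left (norm_nonneg _) ha₁)
  linarith [norm_add_add_norm_sub_le_two_mul_sqrt_two 𝕜 hb₀ hb₁]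

end InnerProductSpace

section Matrix

variable {ι κ : Type*} [Fintype ι] [Fintype κ]

lemma cinner_eq_star_dotProduct (v w : ι → ℂ) : cinner v w = star v ⬝ᵥ w := rfl

lemma cinner_eq_inner (v w : ι → ℂ) :
    cinner v w = ⟪WithLp.toLp 2 v, WithLp.toLp 2 w⟫_ℂ := by
  rw [EuclideanSpace.inner_toLp_toLp, dotProduct_comm, cinner_eq_star_dotProduct]

lemma cnorm_eq_norm (v : ι → ℂ) : cnorm v = ‖WithLp.toLp 2 v‖ := by
  rw [cnorm, EuclideanSpace.norm_eq]

lemma cinner_add_right (u v w : ι → ℂ) : cinner u (v + w) = cinner u v + cinner u w :=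
  dotProduct_add _ _ _

lemma cinner_sub_right (u v w : ι → ℂ) : cinner u (v - w) = cinner u v - cinner u w :=
  dotProduct_sub _ _ _

lemma cinner_mulVec_left (M : Matrix ι ι ℂ) (v w : ι → ℂ) :
    cinner (M *ᵥ v) w = cinner v (Mᴴ *ᵥ w) := by
  rw [cinner_eq_star_dotProduct, cinner_eq_star_dotProduct, Matrix.star_mulVec,
    Matrix.dotProduct_mulVec]

lemma cnorm_mulVec_of_conjTranspose_mul_self [DecidableEq ι] {M : Matrix ι ι ℂ}
    (hM : Mᴴ * M = 1) (v : ι → ℂ) : cnorm (M *ᵥ v) = cnorm v := by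
  have hsq : cnorm (M *ᵥ v) ^ 2 = cnorm v ^ 2 := by
    rw [cnorm_eq_norm, cnorm_eq_norm, ← inner_self_eq_norm_sq (𝕜 := ℂ),
      ← inner_self_eq_norm_sq (𝕜 := ℂ), ← cinner_eq_inner, ← cinner_eq_inner,
      cinner_mulVec_left, Matrix.mulVec_mulVec, hM, Matrix.one_mulVec]
  exact (pow_left_inj₀ (Real.sqrt_nonneg _) (Real.sqrt_nonneg _) two_ne_zero).mp hsq

namespace IsReflection

variable [DecidableEq ι] [DecidableEq κ]

lemma one : IsReflection (1 : Matrix ι ι ℂ) :=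
  ⟨Matrix.isHermitian_one, Matrix.mul_one 1⟩

lemma kronecker {A : Matrix ι ι ℂ} {B : Matrix κ κ ℂ} (hA : IsReflection A)
    (hB : IsReflection B) : IsReflection (A ⊗ₖ B) :=
  ⟨by rw [Matrix.IsHermitian, Matrix.conjTranspose_kronecker, hA.1.eq, hB.1.eq],
    by rw [← Matrix.mul_kronecker_mul, hA.2, hB.2, Matrix.one_kronecker_one]⟩

lemma cnorm_mulVec {M : Matrix ι ι ℂ} (hM : IsReflection M) (v : ι → ℂ) :
    cnorm (M *ᵥ v) = cnorm v :=
  cnorm_mulVec_of_conjTranspose_mul_self (by rw [hM.1.eq, hM.2]) v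

end IsReflection

lemma cinner_kronecker_mulVec [DecidableEq ι] [DecidableEq κ] {R : Matrix ι ι ℂ}
    (hR : R.IsHermitian) (S : Matrix κ κ ℂ) (ψ : ι × κ → ℂ) :
    cinner ψ ((R ⊗ₖ S) *ᵥ ψ) = cinner ((R ⊗ₖ 1) *ᵥ ψ) ((1 ⊗ₖ S) *ᵥ ψ) := by
  rw [cinner_mulVec_left, Matrix.conjTranspose_kronecker, hR.eq, Matrix.conjTranspose_one,
    Matrix.mulVec_mulVec, ← Matrix.mul_kronecker_mul, Matrix.mul_one, Matrix.one_mul]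

lemma re_cinner_chsh_mulVec_le [DecidableEq ι] [DecidableEq κ] {R₀ R₁ : Matrix ι ι ℂ}
    {S₀ S₁ : Matrix κ κ ℂ} (hR₀ : IsReflection R₀) (hR₁ : IsReflection R₁)
    (hS₀ : IsReflection S₀) (hS₁ : IsReflection S₁) {ψ : ι × κ → ℂ} (hψ : cnorm ψ = 1) :
    (cinner ψ ((R₀ ⊗ₖ S₀ + R₀ ⊗ₖ S₁ + R₁ ⊗ₖ S₀ - R₁ ⊗ₖ S₁) *ᵥ ψ)).re ≤ 2 * √2 := by
  set a : Matrix ι ι ℂ → EuclideanSpace ℂ (ι × κ) := fun R => WithLp.toLp 2 ((R ⊗ₖ 1) *ᵥ ψ)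
  set b : Matrix κ κ ℂ → EuclideanSpace ℂ (ι × κ) := fun S => WithLp.toLp 2 ((1 ⊗ₖ S) *ᵥ ψ)
  have ha {R : Matrix ι ι ℂ} (hR : IsReflection R) : ‖a R‖ ≤ 1 := by
    rw [← cnorm_eq_norm, (hR.kronecker IsReflection.one).cnorm_mulVec, hψ]
  have hb {S : Matrix κ κ ℂ} (hS : IsReflection S) : ‖b S‖ ≤ 1 := by
    rw [← cnorm_eq_norm, (IsReflection.one.kronecker hS).cnorm_mulVec, hψ]
  have hchsh : cinner ψ ((R₀ ⊗ₖ S₀ + R₀ ⊗ₖ S₁ + R₁ ⊗ₖ S₀ - R₁ ⊗ₖ S₁) *ᵥ ψ) =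
      ⟪a R₀, b S₀ + b S₁⟫_ℂ + ⟪a R₁, b S₀ - b S₁⟫_ℂ := by
    rw [Matrix.sub_mulVec, Matrix.add_mulVec, Matrix.add_mulVec, cinner_sub_right,
      cinner_add_right, cinner_add_right, cinner_kronecker_mulVec hR₀.1,
      cinner_kronecker_mulVec hR₀.1, cinner_kronecker_mulVec hR₁.1,
      cinner_kronecker_mulVec hR₁.1]
    simp only [cinner_eq_inner, inner_add_right, inner_sub_right, a, b]
    ring
  rw [hchsh, Complex.add_re, ← RCLike.re_to_complex, ← RCLike.re_to_complex]
  exact re_inner_add_re_inner_sub_le_two_mul_sqrt_two (ha hR₀) (ha hR₁) (hb hS₀) (hb hS₁)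

end Matrix

lemma Real.cos_sq_pi_div_eight : Real.cos (Real.pi / 8) ^ 2 = 1 / 2 + √2 / 4 := by
  rw [Real.cos_sq, show 2 * (Real.pi / 8) = Real.pi / 4 by ring, Real.cos_pi_div_four]
  ring

/-- Tsirelson's bound for the CHSH operator. -/
theorem stmt_7 (dA dB : ℕ)
    (R0 R1 : Matrix (Fin dA) (Fin dA) ℂ) (S0 S1 : Matrix (Fin dB) (Fin dB) ℂ)
    (hR0 : IsReflection R0) (hR1 : IsReflection R1)
    (hS0 : IsReflection S0) (hS1 : IsReflection S1)
    (ψ : Fin dA × Fin dB → ℂ) (hψ : cnorm ψ = 1) :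
    (cinner ψ ((R0 ⊗ₖ S0 + R0 ⊗ₖ S1 + R1 ⊗ₖ S0 - R1 ⊗ₖ S1).mulVec ψ)).re
        ≤ 2 * Real.sqrt 2 ∧
    1 / 2 + (1 / 8) *
        (cinner ψ ((R0 ⊗ₖ S0 + R0 ⊗ₖ S1 + R1 ⊗ₖ S0 - R1 ⊗ₖ S1).mulVec ψ)).re
      ≤ Real.cos (Real.pi / 8) ^ 2 := by
  have hbound := re_cinner_chsh_mulVec_le hR0 hR1 hS0 hS1 hψ
  refine ⟨hbound, ?_⟩
  rw [Real.cos_sq_pi_div_eight]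
  linarith

end
end

section
/- Let n ≥ 2 and consider the honest n-qubit protocol strategy: H_A = H_B = (ℂ²)^{⊗n}, ψ = |EPR⟩^{⊗n} ∈ H_A ⊗ H_B pairing Alice's qubit i with Bob's qubit i, (Z_i)_D = σz acting on qubit i, (X_i)_D = σx acting on qubit i for D ∈ {A,B}, and for i < j and b, c ∈ {0,1}, Π^{(i,b),(j,c)}_{x,y} defined as the product of the projection onto the x-eigenspace of M_b acting on qubit i and the projection onto the y-eigenspace of M_c acting on qubit j, where M_0 = H (the Hadamard matrix) and M_1 = −σx H σx. Then the acceptance probability of this strategy equals ω_opt = (1 + 2cos²(π/8))/3. -/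
open scoped Matrix Kronecker ComplexConjugate

noncomputable section

def sgn : Bool → ℂ := fun x => if x then 1 else -1

def omegaOpt : ℝ := (1 + 2 * Real.cos (Real.pi / 8) ^ 2) / 3

/-- A two-outcome-pair projective measurement. -/
def ProjMeas {ι : Type*} [Fintype ι] [DecidableEq ι] (Pi : Bool → Bool → Matrix ι ι ℂ) : Prop :=
  (∀ x y, (Pi x y).IsHermitian ∧ Pi x y * Pi x y = Pi x y) ∧
  (∀ x y x' y', (x, y) ≠ (x', y') → Pi x y * Pi x' y' = 0) ∧
  (∑ x : Bool, ∑ y : Bool, Pi x y) = 1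

/-- `R i b j c` is the marginal observable `R^{jc}_{ib}` obtained from the joint measurements. -/
def RChar {ι : Type*} [Fintype ι] [DecidableEq ι] {n : ℕ}
    (Pi : Fin n → Fin n → Bool → Bool → Bool → Bool → Matrix ι ι ℂ)
    (R : Fin n → Bool → Fin n → Bool → Matrix ι ι ℂ) : Prop :=
  ∀ i j : Fin n, i < j → ∀ b c,
    R i b j c = (∑ x : Bool, ∑ y : Bool, sgn x • Pi i j b c x y) ∧
    R j c i b = (∑ x : Bool, ∑ y : Bool, sgn y • Pi i j b c x y)

/-- The acceptance probability ω = (ω₁ + ω₂ + ω₃)/3 of a strategy for the n-qubit protocol. -/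
def accProb {ιA ιB : Type*} [Fintype ιA] [DecidableEq ιA] [Fintype ιB] [DecidableEq ιB] (n : ℕ)
    (XA ZA : Fin n → Matrix ιA ιA ℂ)
    (XB ZB : Fin n → Matrix ιB ιB ℂ)
    (RA : Fin n → Bool → Fin n → Bool → Matrix ιA ιA ℂ)
    (RB : Fin n → Bool → Fin n → Bool → Matrix ιB ιB ℂ)
    (ψ : ιA × ιB → ℂ) : ℝ :=
  (1 / 3) * (
    (1 / (2 * (n : ℝ))) * ∑ i : Fin n, ∑ a : Bool,
      (1 + (cinner ψ (((if a then XA i else ZA i) ⊗ₖ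
          (if a then XB i else ZB i)).mulVec ψ)).re) / 2
    + (1 / (8 * (n : ℝ) * ((n : ℝ) - 1))) * ∑ i : Fin n, ∑ j : Fin n,
        (if i = j then 0 else ∑ a : Bool, ∑ b : Bool, ∑ c : Bool,
          (1 + (if a && b then -1 else 1) *
            (cinner ψ (((if a then XA i else ZA i) ⊗ₖ RB i b j c).mulVec ψ)).re) / 2)
    + (1 / (8 * (n : ℝ) * ((n : ℝ) - 1))) * ∑ i : Fin n, ∑ j : Fin n,
        (if i = j then 0 else ∑ a : Bool, ∑ b : Bool, ∑ c : Bool,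
          (1 + (if a && b then -1 else 1) *
            (cinner ψ ((RA i b j c ⊗ₖ (if a then XB i else ZB i)).mulVec ψ)).re) / 2))

/-- Validity of a strategy for the n-qubit protocol. -/
def StratValid {ιA ιB : Type*} [Fintype ιA] [DecidableEq ιA] [Fintype ιB] [DecidableEq ιB]
    (n : ℕ)
    (XA ZA : Fin n → Matrix ιA ιA ℂ)
    (XB ZB : Fin n → Matrix ιB ιB ℂ)
    (PiA : Fin n → Fin n → Bool → Bool → Bool → Bool → Matrix ιA ιA ℂ)
    (PiB : Fin n → Fin n → Bool → Bool → Bool → Bool → Matrix ιB ιB ℂ)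
    (ψ : ιA × ιB → ℂ) : Prop :=
  cnorm ψ = 1 ∧
  (∀ i, IsReflection (XA i) ∧ IsReflection (ZA i) ∧ IsReflection (XB i) ∧ IsReflection (ZB i)) ∧
  (∀ i j : Fin n, i < j → ∀ b c, ProjMeas (PiA i j b c)) ∧
  (∀ i j : Fin n, i < j → ∀ b c, ProjMeas (PiB i j b c))

/-- The Hadamard matrix. -/
def Had : Matrix (Fin 2) (Fin 2) ℂ := ((Real.sqrt 2 : ℝ) : ℂ)⁻¹ • !![1, 1; 1, -1]

/-- The measurement observable of the player who receives two tuples: M₀ = H, M₁ = -σx H σx. -/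
def Mb : Bool → Matrix (Fin 2) (Fin 2) ℂ := fun b => if b then -(sx * Had * sx) else Had

/-- Projection onto the ±1 eigenspace of a single-qubit reflection. -/
def eigProj (x : Bool) (M : Matrix (Fin 2) (Fin 2) ℂ) : Matrix (Fin 2) (Fin 2) ℂ :=
  (1 / 2 : ℂ) • ((1 : Matrix (Fin 2) (Fin 2) ℂ) + sgn x • M)

/-- n EPR pairs shared between Alice and Bob, pairing qubit i with qubit i. -/
def honestPsi (n : ℕ) : (Fin n → Fin 2) × (Fin n → Fin 2) → ℂ :=
  fun p => ∏ j : Fin n, eprAmp (p.1 j) (p.2 j)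

/-- The honest joint measurement Π^{(i,b),(j,c)}_{x,y} (for i < j). -/
def honestPi (n : ℕ) (i j : Fin n) (b c x y : Bool) :
    Matrix ((Fin n → Fin 2)) ((Fin n → Fin 2)) ℂ :=
  onQubit i (eigProj x (Mb b)) * onQubit j (eigProj y (Mb c))

/-- The marginal observables R^{jc}_{ib} of the honest strategy. -/
def honestR (n : ℕ) (i : Fin n) (b : Bool) (j : Fin n) (c : Bool) :
    Matrix ((Fin n → Fin 2)) ((Fin n → Fin 2)) ℂ :=
  if i < j then ∑ x : Bool, ∑ y : Bool, sgn x • honestPi n i j b c x y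
  else ∑ x : Bool, ∑ y : Bool, sgn y • honestPi n j i c b x y

/-!
The honest state is a product of EPR pairs and every honest observable acts on a single qubit,
so each expectation factorises over the qubits: the pairs that are not acted on contribute
`⟨EPR|1 ⊗ 1|EPR⟩ = 1`, and the remaining pair gives `⟨EPR|P ⊗ Q|EPR⟩ = tr (P Qᵀ) / 2`.
The marginal observable `R^{jc}_{ib}` of the honest joint measurement is `M_b` on qubit `i`,
so the consistency tests of `ω₁` always pass, while every test of `ω₂` and `ω₃` is a CHSH
correlation `±1/√2` and passes with probability `(1 + 1/√2)/2 = cos²(π/8)`.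
-/

section TensorPi

variable {K : Type*} [Fintype K]

def tensorPi {R d : Type*} [CommMonoid R] (M : K → Matrix d d R) : Matrix (K → d) (K → d) R :=
  Matrix.of fun f g => ∏ k, M k (f k) (g k)

lemma tensorPi_one {R d : Type*} [CommSemiring R] [DecidableEq d] :
    tensorPi (1 : K → Matrix d d R) = 1 := by
  ext f g
  simp [tensorPi, Matrix.one_apply, Finset.prod_ite_zero, funext_iff]

variable [DecidableEq K] (k : K)

lemma onQubit_eq_tensorPi (M : Matrix (Fin 2) (Fin 2) ℂ) :
    onQubit k M = tensorPi (Pi.mulSingle k M) := by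
  ext f g
  by_cases h : ∀ k', k' ≠ k → f k' = g k'
  · rw [onQubit, if_pos h, tensorPi, Matrix.of_apply, Finset.prod_eq_single k
      (fun k' _ hk' => by simp [hk', h k' hk']) (by simp)]
    simp
  · push Not at h
    obtain ⟨k', hk', hfg⟩ := h
    rw [onQubit, if_neg (by push Not; exact ⟨k', hk', hfg⟩)]
    exact (Finset.prod_eq_zero (Finset.mem_univ k') (by simp [hk', hfg])).symm

lemma onQubit_one : onQubit k (1 : Matrix (Fin 2) (Fin 2) ℂ) = 1 := by
  rw [onQubit_eq_tensorPi, Pi.mulSingle_one, tensorPi_one]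

lemma onQubit_sum {ι : Type*} (s : Finset ι) (M : ι → Matrix (Fin 2) (Fin 2) ℂ) :
    onQubit k (∑ x ∈ s, M x) = ∑ x ∈ s, onQubit k (M x) := by
  ext f g
  simp only [onQubit, Matrix.sum_apply]
  split_ifs <;> simp

lemma onQubit_smul (c : ℂ) (M : Matrix (Fin 2) (Fin 2) ℂ) :
    onQubit k (c • M) = c • onQubit k M := by
  ext f g
  simp only [onQubit, Matrix.smul_apply]
  split_ifs <;> simp

end TensorPi

lemma sum_eigProj (M : Matrix (Fin 2) (Fin 2) ℂ) : ∑ x, eigProj x M = 1 := by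
  simp only [Fintype.sum_bool, eigProj, sgn, if_true, Bool.false_eq_true, if_false]
  module

lemma sum_sgn_smul_eigProj (M : Matrix (Fin 2) (Fin 2) ℂ) : ∑ x, sgn x • eigProj x M = M := by
  simp only [Fintype.sum_bool, eigProj, sgn, if_true, Bool.false_eq_true, if_false]
  module

lemma honestR_rChar (n : ℕ) : RChar (honestPi n) (honestR n) :=
  fun _ _ hij _ _ => ⟨if_pos hij, if_neg hij.asymm⟩

lemma honestR_eq_onQubit (n : ℕ) (i : Fin n) (b : Bool) (j : Fin n) (c : Bool) :
    honestR n i b j c = onQubit i (Mb b) := by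
  unfold honestR honestPi
  split_ifs
  · simp only [← smul_mul_assoc, ← Fintype.sum_mul_sum, ← onQubit_smul, ← onQubit_sum,
      sum_sgn_smul_eigProj, sum_eigProj, onQubit_one, mul_one]
  · simp only [← mul_smul_comm, ← Fintype.sum_mul_sum, ← onQubit_smul, ← onQubit_sum,
      sum_sgn_smul_eigProj, sum_eigProj, onQubit_one, one_mul]

lemma sum_pi_four_prod_eq_prod_sum {ι α R : Type*} [Fintype ι] [DecidableEq ι] [Fintype α]
    [CommSemiring R] (f : ι → α → α → α → α → R) :
    ∑ p₁ : ι → α, ∑ p₂ : ι → α, ∑ q₁ : ι → α, ∑ q₂ : ι → α,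
      ∏ j, f j (p₁ j) (p₂ j) (q₁ j) (q₂ j) = ∏ j, ∑ a, ∑ b, ∑ c, ∑ d, f j a b c d := by
  simp only [Fintype.prod_sum]

lemma trace_mul_transpose_comm {m R : Type*} [Fintype m] [CommSemiring R] (P Q : Matrix m m R) :
    (P * Qᵀ).trace = (Q * Pᵀ).trace := by
  rw [← Matrix.trace_transpose, Matrix.transpose_mul, Matrix.transpose_transpose]

lemma trace_mul_transpose_fin_two {R : Type*} [Semiring R] (P Q : Matrix (Fin 2) (Fin 2) R) :
    (P * Qᵀ).trace = P 0 0 * Q 0 0 + P 0 1 * Q 0 1 + (P 1 0 * Q 1 0 + P 1 1 * Q 1 1) := by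
  simp only [Matrix.trace, Matrix.diag, Matrix.mul_apply, Matrix.transpose_apply,
    Fin.sum_univ_two]

lemma inv_sqrt_two_mul_self : ((Real.sqrt 2 : ℝ) : ℂ)⁻¹ * ((Real.sqrt 2 : ℝ) : ℂ)⁻¹ = 1 / 2 := by
  rw [← mul_inv, ← Complex.ofReal_mul, Real.mul_self_sqrt zero_le_two]
  norm_num

lemma inv_sqrt_two_add_self :
    ((Real.sqrt 2 : ℝ) : ℂ)⁻¹ + ((Real.sqrt 2 : ℝ) : ℂ)⁻¹ = Real.sqrt 2 := by
  have h : ((Real.sqrt 2 : ℝ) : ℂ) ≠ 0 := by simp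
  field_simp
  rw [← Complex.ofReal_pow, Real.sq_sqrt zero_le_two]
  norm_num

lemma conj_eprAmp (a b : Fin 2) : starRingEnd ℂ (eprAmp a b) = eprAmp a b := by
  unfold eprAmp
  split_ifs <;> simp

lemma sum_eprAmp_mul_eprAmp (P Q : Matrix (Fin 2) (Fin 2) ℂ) :
    ∑ a, ∑ b, ∑ c, ∑ d, eprAmp a b * (P a c * Q b d * eprAmp c d) = (P * Qᵀ).trace / 2 := by
  rw [trace_mul_transpose_fin_two]
  simp only [eprAmp, mul_ite, mul_zero, ite_mul, zero_mul, Finset.sum_ite_eq, Finset.mem_univ,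
    if_true, Finset.sum_ite_irrel, Fin.sum_univ_two, Finset.sum_const_zero]
  linear_combination (P 0 0 * Q 0 0 + P 0 1 * Q 0 1 + P 1 0 * Q 1 0 + P 1 1 * Q 1 1) *
    inv_sqrt_two_mul_self

lemma cinner_honestPsi_tensorPi {n : ℕ} (P Q : Fin n → Matrix (Fin 2) (Fin 2) ℂ) :
    cinner (honestPsi n) ((tensorPi P ⊗ₖ tensorPi Q) *ᵥ honestPsi n) =
      ∏ j, (P j * (Q j)ᵀ).trace / 2 := by
  calc _ = ∑ p₁ : Fin n → Fin 2, ∑ p₂ : Fin n → Fin 2, ∑ q₁ : Fin n → Fin 2, ∑ q₂ : Fin n → Fin 2,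
        ∏ j, eprAmp (p₁ j) (p₂ j) * (P j (p₁ j) (q₁ j) * Q j (p₂ j) (q₂ j) *
          eprAmp (q₁ j) (q₂ j)) := by
        simp only [cinner, Matrix.mulVec, dotProduct, Fintype.sum_prod_type, Finset.mul_sum,
          Matrix.kroneckerMap_apply, tensorPi, Matrix.of_apply, honestPsi, map_prod, conj_eprAmp,
          ← Finset.prod_mul_distrib]
    _ = ∏ j, (P j * (Q j)ᵀ).trace / 2 := by
        rw [sum_pi_four_prod_eq_prod_sum
          fun j a b c d => eprAmp a b * (P j a c * Q j b d * eprAmp c d)]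
        simp only [sum_eprAmp_mul_eprAmp]

lemma cinner_honestPsi_onQubit (n : ℕ) (i : Fin n) (P Q : Matrix (Fin 2) (Fin 2) ℂ) :
    cinner (honestPsi n) ((onQubit i P ⊗ₖ onQubit i Q) *ᵥ honestPsi n) = (P * Qᵀ).trace / 2 := by
  rw [onQubit_eq_tensorPi, onQubit_eq_tensorPi, cinner_honestPsi_tensorPi,
    Finset.prod_eq_single i (fun j _ hj => by simp [hj]) (by simp)]
  simp

lemma Mb_true : Mb true = ((Real.sqrt 2 : ℝ) : ℂ)⁻¹ • !![1, -1; -1, -1] := by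
  ext a b
  fin_cases a <;> fin_cases b <;> simp [Mb, Had, sx]

lemma Mb_false : Mb false = ((Real.sqrt 2 : ℝ) : ℂ)⁻¹ • !![1, 1; 1, -1] := rfl

lemma trace_sz_mul_transpose_sz : (sz * szᵀ).trace = 2 := by
  rw [trace_mul_transpose_fin_two]
  norm_num [sz]

lemma trace_sx_mul_transpose_sx : (sx * sxᵀ).trace = 2 := by
  rw [trace_mul_transpose_fin_two]
  norm_num [sx]

lemma trace_sz_mul_transpose_Mb (b : Bool) : (sz * (Mb b)ᵀ).trace = Real.sqrt 2 := by
  rw [trace_mul_transpose_fin_two]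
  cases b <;> simp [sz, Mb_true, Mb_false, inv_sqrt_two_add_self]

lemma trace_sx_mul_transpose_Mb (b : Bool) :
    (sx * (Mb b)ᵀ).trace = (if b then -1 else 1) * Real.sqrt 2 := by
  rw [trace_mul_transpose_fin_two]
  cases b <;> simp [sx, Mb_true, Mb_false, ← neg_add, inv_sqrt_two_add_self]

lemma omegaOpt_eq : omegaOpt = (2 + Real.sqrt 2 / 2) / 3 := by
  rw [omegaOpt, Real.cos_pi_div_eight, div_pow, Real.sq_sqrt (by positivity)]
  ring

lemma sum_ite_eq_zero_else_const {ι R : Type*} [Fintype ι] [DecidableEq ι] [Ring R] (i : ι)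
    (C : R) : ∑ j, (if i = j then 0 else C) = (Fintype.card ι - 1 : R) * C := by
  rw [← Finset.sum_erase_add _ _ (Finset.mem_univ i),
    Finset.sum_congr rfl fun j hj => if_neg (Finset.ne_of_mem_erase hj).symm]
  simp [Finset.card_erase_of_mem, Nat.cast_pred (Fintype.card_pos_iff.mpr ⟨i⟩)]

/-- completeness — the honest strategy passes with probability ω_opt. -/
theorem stmt_10 (n : ℕ) (hn : 2 ≤ n) :
    RChar (honestPi n) (honestR n) ∧
    accProb n (fun i => onQubit i sx) (fun i => onQubit i sz)
      (fun i => onQubit i sx) (fun i => onQubit i sz)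
      (honestR n) (honestR n) (honestPsi n) = omegaOpt := by
  refine ⟨honestR_rChar n, ?_⟩
  simp only [accProb, honestR_eq_onQubit, Fintype.sum_bool, if_true, if_false, Bool.false_eq_true,
    Bool.and_true, Bool.and_false, cinner_honestPsi_onQubit, trace_mul_transpose_comm (Mb _),
    trace_sz_mul_transpose_sz, trace_sx_mul_transpose_sx, trace_sz_mul_transpose_Mb,
    trace_sx_mul_transpose_Mb, neg_mul, one_mul, Complex.div_ofNat_re, Complex.neg_re,
    Complex.ofReal_re, Complex.re_ofNat, sum_ite_eq_zero_else_const, Finset.sum_const,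
    Finset.card_univ, Fintype.card_fin, Fintype.card_bool, nsmul_eq_mul, omegaOpt_eq]
  have hn₂ : (2 : ℝ) ≤ n := by exact_mod_cast hn
  have hn₀ : (n : ℝ) ≠ 0 := by positivity
  have hn₁ : (n : ℝ) - 1 ≠ 0 := by linarith
  field_simp
  ring

end
end
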